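/- Let A be a regular n×n max-plus matrix (n ≥ 1) with maximum cycle mean λ(A), let X be a set of vectors in Fin n → ℝ, and let l* ≥ 0 and c* ≥ 1 be such that for every x0 ∈ X the orbit x of A from x0 satisfies x (j+c*) i = λ(A)·c* + x j i for all j ≥ l* and all i (i.e., l* bounds all local transients over X and c* is a common multiple of all local cyclicities over X). Set k := l* + c* - 1. Then for every TDLTL formula φ in positive normal form over dimension n: every orbit of A from an initial vector in X satisfies φ (under the unbounded semantics ⊨) if and only if every orbit of A from an initial vector in X satisfies φ under the bounded lasso semantics ⊨_{k,l*}. Thus l* + c* - 1 is an upper bound on the completeness threshold for TDLTL model checking of the MPL system over X. -/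

import Mathlib

/-- `A` is regular: every row contains at least one finite entry. -/
def MPRegular {n : ℕ} (A : Matrix (Fin n) (Fin n) (WithBot ℝ)) : Prop :=
  ∀ i : Fin n, ∃ j : Fin n, A i j ≠ ⊥

/-- `μ` is the mean of some circuit of the precedence graph of `A`. -/
def IsCycleMean {n : ℕ} (A : Matrix (Fin n) (Fin n) (WithBot ℝ)) (μ : ℝ) : Prop :=
  ∃ m : ℕ, 1 ≤ m ∧ ∃ p : ℕ → Fin n, ∃ w : ℕ → ℝ,
    p m = p 0 ∧ (∀ t < m, A (p (t + 1)) (p t) = ((w t : ℝ) : WithBot ℝ)) ∧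
    μ = (∑ t ∈ Finset.range m, w t) / m

/-- `lam` is the maximum cycle mean `λ(A)` of `A`. -/
def IsMaxCycleMean {n : ℕ} (A : Matrix (Fin n) (Fin n) (WithBot ℝ)) (lam : ℝ) : Prop :=
  IsCycleMean A lam ∧ ∀ μ : ℝ, IsCycleMean A μ → μ ≤ lam

/-- The orbit of a (regular) max-plus matrix `A` from the initial vector
`x0`: `x 0 = x0` and `x (k+1) i = max_j (A i j + x k j)` (for regular `A`
this maximum is a real number, extracted with `WithBot.unbot' 0`). -/
noncomputable def mpOrbit {n : ℕ} (A : Matrix (Fin n) (Fin n) (WithBot ℝ))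
    (x0 : Fin n → ℝ) : ℕ → Fin n → ℝ
  | 0 => x0
  | k + 1 => fun i =>
      WithBot.unbotD 0 (Finset.univ.sup fun j => A i j + ((mpOrbit A x0 k j : ℝ) : WithBot ℝ))


/-- Comparison symbol `∼ ∈ {≥, >}`. -/
inductive Cmp where
  | ge : Cmp
  | gt : Cmp

/-- The relation on `ℝ` denoted by a comparison symbol. -/
def Cmp.rel : Cmp → ℝ → ℝ → Prop
  | .ge => (· ≥ ·)
  | .gt => (· > ·)

/-- TDLTL formulas in positive normal form over dimension `n`. -/
inductive TDLTL (n : ℕ) where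
  | top : TDLTL n
  | bot : TDLTL n
  | atom (i j : Fin n) (c : Cmp) (α : ℝ) : TDLTL n
  | natom (i j : Fin n) (c : Cmp) (α : ℝ) : TDLTL n
  | and (φ₁ φ₂ : TDLTL n) : TDLTL n
  | or (φ₁ φ₂ : TDLTL n) : TDLTL n
  | next (φ : TDLTL n) : TDLTL n
  | untl (φ₁ φ₂ : TDLTL n) : TDLTL n
  | release (φ₁ φ₂ : TDLTL n) : TDLTL n

/-- The suffix `π[m..]` of a sequence. -/
def shift {n : ℕ} (π : ℕ → Fin n → ℝ) (m : ℕ) : ℕ → Fin n → ℝ :=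
  fun t => π (m + t)

/-- (Unbounded) TDLTL satisfaction `π ⊨ φ`. -/
def Sat {n : ℕ} : TDLTL n → (ℕ → Fin n → ℝ) → Prop
  | .top, _ => True
  | .bot, _ => False
  | .atom i j c α, π => c.rel (π 0 i - π 0 j) α
  | .natom i j c α, π => ¬ c.rel (π 0 i - π 0 j) α
  | .and φ₁ φ₂, π => Sat φ₁ π ∧ Sat φ₂ π
  | .or φ₁ φ₂, π => Sat φ₁ π ∨ Sat φ₂ π
  | .next φ, π => Sat φ (shift π 1)
  | .untl φ₁ φ₂, π => ∃ j : ℕ, Sat φ₂ (shift π j) ∧ ∀ t < j, Sat φ₁ (shift π t)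
  | .release φ₁ φ₂, π =>
      (∀ j : ℕ, Sat φ₂ (shift π j)) ∨
      (∃ j : ℕ, Sat φ₁ (shift π j) ∧ ∀ t ≤ j, Sat φ₂ (shift π t))

/-- Bounded lasso satisfaction `sat(m, φ)` over a `(k,l)`-lasso `π`. -/
def BSat {n : ℕ} (π : ℕ → Fin n → ℝ) (k l : ℕ) : TDLTL n → ℕ → Prop
  | .top, _ => True
  | .bot, _ => False
  | .atom i j c α, m => c.rel (π m i - π m j) α
  | .natom i j c α, m => ¬ c.rel (π m i - π m j) α
  | .and φ₁ φ₂, m => BSat π k l φ₁ m ∧ BSat π k l φ₂ m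
  | .or φ₁ φ₂, m => BSat π k l φ₁ m ∨ BSat π k l φ₂ m
  | .next φ, m => if m < k then BSat π k l φ (m + 1) else BSat π k l φ l
  | .untl φ₁ φ₂, m =>
      (∃ j : ℕ, m ≤ j ∧ j ≤ k ∧ BSat π k l φ₂ j ∧
        ∀ t : ℕ, m ≤ t → t < j → BSat π k l φ₁ t) ∨
      (∃ j : ℕ, l ≤ j ∧ j < m ∧ BSat π k l φ₂ j ∧
        (∀ t : ℕ, m ≤ t → t ≤ k → BSat π k l φ₁ t) ∧
        (∀ t : ℕ, l ≤ t → t < j → BSat π k l φ₁ t))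
  | .release φ₁ φ₂, m =>
      (∀ j : ℕ, min m l ≤ j → j ≤ k → BSat π k l φ₂ j) ∨
      (∃ j : ℕ, m ≤ j ∧ j ≤ k ∧ BSat π k l φ₁ j ∧
        ∀ t : ℕ, m ≤ t → t ≤ j → BSat π k l φ₂ t) ∨
      (∃ j : ℕ, l ≤ j ∧ j < m ∧ BSat π k l φ₁ j ∧
        (∀ t : ℕ, m ≤ t → t ≤ k → BSat π k l φ₂ t) ∧
        (∀ t : ℕ, l ≤ t → t ≤ j → BSat π k l φ₂ t))

private lemma shift_shift' {n : ℕ} (π : ℕ → Fin n → ℝ) (a b : ℕ) :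
    shift (shift π a) b = shift π (a + b) := by
  funext t; simp [shift, Nat.add_assoc]

private lemma shift_zero' {n : ℕ} (π : ℕ → Fin n → ℝ) : shift π 0 = π := by
  funext t; simp [shift]

/-- `Sat` only depends on differences of coordinates. -/
private lemma sat_diff {n : ℕ} (φ : TDLTL n) :
    ∀ π π' : ℕ → Fin n → ℝ,
      (∀ t i j, π t i - π t j = π' t i - π' t j) → (Sat φ π ↔ Sat φ π') := by
  induction φ with
  | top => intro π π' h; simp [Sat]
  | bot => intro π π' h; simp [Sat]
  | atom i j c α => intro π π' h; simp only [Sat, h 0 i j]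
  | natom i j c α => intro π π' h; simp only [Sat, h 0 i j]
  | and φ₁ φ₂ ih₁ ih₂ => intro π π' h; exact and_congr (ih₁ π π' h) (ih₂ π π' h)
  | or φ₁ φ₂ ih₁ ih₂ => intro π π' h; exact or_congr (ih₁ π π' h) (ih₂ π π' h)
  | next φ ih =>
      intro π π' h
      exact ih _ _ (fun t i j => h (1 + t) i j)
  | untl φ₁ φ₂ ih₁ ih₂ =>
      intro π π' h
      exact exists_congr fun j =>
        and_congr (ih₂ _ _ fun t i j' => h (j + t) i j')
          (forall_congr' fun t => imp_congr_right fun _ =>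
            ih₁ _ _ fun s i j' => h (t + s) i j')
  | release φ₁ φ₂ ih₁ ih₂ =>
      intro π π' h
      exact or_congr
        (forall_congr' fun j => ih₂ _ _ fun t i j' => h (j + t) i j')
        (exists_congr fun j =>
          and_congr (ih₁ _ _ fun t i j' => h (j + t) i j')
            (forall_congr' fun t => imp_congr_right fun _ =>
              ih₂ _ _ fun s i j' => h (t + s) i j'))

/-- Reindexed form of `Sat` for until on a shifted sequence. -/
private lemma sat_untl_iff {n : ℕ} (π : ℕ → Fin n → ℝ) (φ₁ φ₂ : TDLTL n) (m : ℕ) :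
    Sat (.untl φ₁ φ₂) (shift π m) ↔
      ∃ J, m ≤ J ∧ Sat φ₂ (shift π J) ∧ ∀ t, m ≤ t → t < J → Sat φ₁ (shift π t) := by
  show (∃ j, Sat φ₂ (shift (shift π m) j) ∧ ∀ t < j, Sat φ₁ (shift (shift π m) t)) ↔ _
  simp only [shift_shift']
  constructor
  · rintro ⟨j, h2, h1⟩
    refine ⟨m + j, Nat.le_add_right _ _, h2, fun t hmt htJ => ?_⟩
    have := h1 (t - m) (by omega)
    rwa [show m + (t - m) = t by omega] at this
  · rintro ⟨J, hmJ, h2, h1⟩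
    refine ⟨J - m, ?_, fun t ht => h1 (m + t) (Nat.le_add_right _ _) (by omega)⟩
    rwa [show m + (J - m) = J by omega]

/-- Reindexed form of `Sat` for release on a shifted sequence. -/
private lemma sat_rel_iff {n : ℕ} (π : ℕ → Fin n → ℝ) (φ₁ φ₂ : TDLTL n) (m : ℕ) :
    Sat (.release φ₁ φ₂) (shift π m) ↔
      (∀ J, m ≤ J → Sat φ₂ (shift π J)) ∨
      ∃ J, m ≤ J ∧ Sat φ₁ (shift π J) ∧ ∀ t, m ≤ t → t ≤ J → Sat φ₂ (shift π t) := by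
  show ((∀ j, Sat φ₂ (shift (shift π m) j)) ∨
      (∃ j, Sat φ₁ (shift (shift π m) j) ∧ ∀ t ≤ j, Sat φ₂ (shift (shift π m) t))) ↔ _
  simp only [shift_shift']
  constructor
  · rintro (h | ⟨j, h1, h2⟩)
    · left
      intro J hmJ
      have := h (J - m); rwa [show m + (J - m) = J by omega] at this
    · right
      refine ⟨m + j, Nat.le_add_right _ _, h1, fun t hmt htJ => ?_⟩
      have := h2 (t - m) (by omega)
      rwa [show m + (t - m) = t by omega] at this
  · rintro (h | ⟨J, hmJ, h1, h2⟩)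
    · exact Or.inl fun j => h (m + j) (Nat.le_add_right _ _)
    · right
      refine ⟨J - m, ?_, fun t ht => h2 (m + t) (Nat.le_add_right _ _) (by omega)⟩
      rwa [show m + (J - m) = J by omega]

/-- Main lemma: for an eventually periodic-with-drift sequence, bounded lasso
satisfaction at positions `m ≤ k` coincides with unbounded satisfaction. -/
private lemma bsat_iff_sat {n : ℕ} (π : ℕ → Fin n → ℝ) (l c : ℕ) (hc : 1 ≤ c)
    (lam : ℝ) (H : ∀ m, l ≤ m → ∀ i, π (m + c) i = lam * c + π m i)
    (k : ℕ) (hk1 : k + 1 = l + c)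
    (φ : TDLTL n) :
    ∀ m ≤ k, (BSat π k l φ m ↔ Sat φ (shift π m)) := by
  have hlk : l ≤ k := by omega
  have hper : ∀ (ψ : TDLTL n) (a : ℕ), l ≤ a →
      (Sat ψ (shift π (a + c)) ↔ Sat ψ (shift π a)) := by
    intro ψ a ha
    apply sat_diff
    intro t i j
    show π (a + c + t) i - π (a + c + t) j = π (a + t) i - π (a + t) j
    rw [show a + c + t = (a + t) + c by omega, H (a + t) (by omega) i,
      H (a + t) (by omega) j]
    ring
  have hiter : ∀ (ψ : TDLTL n) (q a : ℕ), l ≤ a →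
      (Sat ψ (shift π (a + q * c)) ↔ Sat ψ (shift π a)) := by
    intro ψ q
    induction q with
    | zero => intro a ha; simp
    | succ q ih =>
        intro a ha
        rw [show a + (q + 1) * c = (a + c) + q * c by ring]
        exact (ih (a + c) (by omega)).trans (hper ψ a ha)
  have hred : ∀ M, k < M → ∃ j' q, l ≤ j' ∧ j' ≤ k ∧ 1 ≤ q ∧ M = j' + q * c := by
    intro M hM
    refine ⟨l + (M - l) % c, (M - l) / c, by omega, ?_, ?_, ?_⟩
    · have := Nat.mod_lt (M - l) (show 0 < c by omega); omega
    · exact (Nat.one_le_div_iff (by omega)).mpr (by omega)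
    · have hlM : l ≤ M := by omega
      have h2 := Nat.mod_add_div' (M - l) c
      omega
  induction φ with
  | top => intro m hm; simp [BSat, Sat]
  | bot => intro m hm; simp [BSat, Sat]
  | atom i j c' α =>
      intro m hm
      show c'.rel (π m i - π m j) α ↔ c'.rel (shift π m 0 i - shift π m 0 j) α
      simp [shift]
  | natom i j c' α =>
      intro m hm
      show ¬ c'.rel (π m i - π m j) α ↔ ¬ c'.rel (shift π m 0 i - shift π m 0 j) α
      simp [shift]
  | and φ₁ φ₂ ih₁ ih₂ =>
      intro m hm
      exact and_congr (ih₁ m hm) (ih₂ m hm)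
  | or φ₁ φ₂ ih₁ ih₂ =>
      intro m hm
      exact or_congr (ih₁ m hm) (ih₂ m hm)
  | next φ ih =>
      intro m hm
      show (if m < k then BSat π k l φ (m + 1) else BSat π k l φ l) ↔
        Sat φ (shift (shift π m) 1)
      rw [shift_shift']
      by_cases h : m < k
      · rw [if_pos h]; exact ih (m + 1) (by omega)
      · rw [if_neg h]
        have hmk : m = k := by omega
        rw [hmk, show k + 1 = l + c from hk1]
        exact (ih l hlk).trans (hper φ l le_rfl).symm
  | untl φ₁ φ₂ ih₁ ih₂ =>
      intro m hm
      rw [sat_untl_iff]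
      show ((∃ j, m ≤ j ∧ j ≤ k ∧ BSat π k l φ₂ j ∧
          ∀ t, m ≤ t → t < j → BSat π k l φ₁ t) ∨
        (∃ j, l ≤ j ∧ j < m ∧ BSat π k l φ₂ j ∧
          (∀ t, m ≤ t → t ≤ k → BSat π k l φ₁ t) ∧
          (∀ t, l ≤ t → t < j → BSat π k l φ₁ t))) ↔ _
      constructor
      · rintro (⟨j, hmj, hjk, h2, h1⟩ | ⟨j, hlj, hjm, h2, hA, hB⟩)
        · exact ⟨j, hmj, (ih₂ j hjk).mp h2,
            fun t hmt htj => (ih₁ t (by omega)).mp (h1 t hmt htj)⟩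
        · refine ⟨j + c, by omega, (hper φ₂ j hlj).mpr ((ih₂ j (by omega)).mp h2),
            fun t hmt htJ => ?_⟩
          by_cases htk : t ≤ k
          · exact (ih₁ t htk).mp (hA t hmt htk)
          · have h1 : Sat φ₁ (shift π (t - c)) :=
              (ih₁ (t - c) (by omega)).mp (hB (t - c) (by omega) (by omega))
            have := (hper φ₁ (t - c) (by omega)).mpr h1
            rwa [show t - c + c = t by omega] at this
      · rintro ⟨J, hmJ, h2, h1⟩
        by_cases hJk : J ≤ k
        · exact Or.inl ⟨J, hmJ, hJk, (ih₂ J hJk).mpr h2,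
            fun t hmt htJ => (ih₁ t (by omega)).mpr (h1 t hmt htJ)⟩
        · obtain ⟨j', q, hlj', hj'k, hq, hJ⟩ := hred J (by omega)
          have satj' : Sat φ₂ (shift π j') := by
            rw [hJ] at h2; exact (hiter φ₂ q j' hlj').mp h2
          by_cases hmj' : m ≤ j'
          · exact Or.inl ⟨j', hmj', hj'k, (ih₂ j' hj'k).mpr satj',
              fun t hmt htj' => (ih₁ t (by omega)).mpr (h1 t hmt (by omega))⟩
          · refine Or.inr ⟨j', hlj', by omega, (ih₂ j' hj'k).mpr satj',
              fun t hmt htk => (ih₁ t htk).mpr (h1 t hmt (by omega)),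
              fun t hlt htj' => ?_⟩
            have hcq : c ≤ q * c := Nat.le_mul_of_pos_left c (by omega)
            have hS : Sat φ₁ (shift π (t + q * c)) :=
              h1 (t + q * c) (by omega) (by omega)
            exact (ih₁ t (by omega)).mpr ((hiter φ₁ q t hlt).mp hS)
  | release φ₁ φ₂ ih₁ ih₂ =>
      intro m hm
      rw [sat_rel_iff]
      show ((∀ j, min m l ≤ j → j ≤ k → BSat π k l φ₂ j) ∨
        (∃ j, m ≤ j ∧ j ≤ k ∧ BSat π k l φ₁ j ∧
          ∀ t, m ≤ t → t ≤ j → BSat π k l φ₂ t) ∨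
        (∃ j, l ≤ j ∧ j < m ∧ BSat π k l φ₁ j ∧
          (∀ t, m ≤ t → t ≤ k → BSat π k l φ₂ t) ∧
          (∀ t, l ≤ t → t ≤ j → BSat π k l φ₂ t))) ↔ _
      constructor
      · rintro (h | ⟨j, hmj, hjk, h1, h2⟩ | ⟨j, hlj, hjm, h1, hA, hB⟩)
        · left
          intro J hmJ
          by_cases hJk : J ≤ k
          · exact (ih₂ J hJk).mp (h J (by omega) hJk)
          · obtain ⟨j', q, hlj', hj'k, hq, hJ⟩ := hred J (by omega)
            have : Sat φ₂ (shift π j') := (ih₂ j' hj'k).mp (h j' (by omega) hj'k)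
            rw [hJ]
            exact (hiter φ₂ q j' hlj').mpr this
        · right
          exact ⟨j, hmj, (ih₁ j hjk).mp h1,
            fun t hmt htj => (ih₂ t (by omega)).mp (h2 t hmt htj)⟩
        · right
          refine ⟨j + c, by omega, (hper φ₁ j hlj).mpr ((ih₁ j (by omega)).mp h1),
            fun t hmt htJ => ?_⟩
          by_cases htk : t ≤ k
          · exact (ih₂ t htk).mp (hA t hmt htk)
          · have h2 : Sat φ₂ (shift π (t - c)) :=
              (ih₂ (t - c) (by omega)).mp (hB (t - c) (by omega) (by omega))
            have := (hper φ₂ (t - c) (by omega)).mpr h2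
            rwa [show t - c + c = t by omega] at this
      · rintro (h | ⟨J, hmJ, h1, h2⟩)
        · left
          intro j hminj hjk
          by_cases hmj : m ≤ j
          · exact (ih₂ j hjk).mpr (h j hmj)
          · have hlj : l ≤ j := by omega
            have : Sat φ₂ (shift π (j + c)) := h (j + c) (by omega)
            exact (ih₂ j hjk).mpr ((hper φ₂ j hlj).mp this)
        · by_cases hJk : J ≤ k
          · exact Or.inr (Or.inl ⟨J, hmJ, hJk, (ih₁ J hJk).mpr h1,
              fun t hmt htJ => (ih₂ t (by omega)).mpr (h2 t hmt htJ)⟩)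
          · obtain ⟨j', q, hlj', hj'k, hq, hJ⟩ := hred J (by omega)
            have satj' : Sat φ₁ (shift π j') := by
              rw [hJ] at h1; exact (hiter φ₁ q j' hlj').mp h1
            by_cases hmj' : m ≤ j'
            · exact Or.inr (Or.inl ⟨j', hmj', hj'k, (ih₁ j' hj'k).mpr satj',
                fun t hmt htj' => (ih₂ t (by omega)).mpr (h2 t hmt (by omega))⟩)
            · refine Or.inr (Or.inr ⟨j', hlj', by omega, (ih₁ j' hj'k).mpr satj',
                fun t hmt htk => (ih₂ t htk).mpr (h2 t hmt (by omega)),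
                fun t hlt htj' => ?_⟩)
              have hcq : c ≤ q * c := Nat.le_mul_of_pos_left c (by omega)
              have hS : Sat φ₂ (shift π (t + q * c)) :=
                h2 (t + q * c) (by omega) (by omega)
              exact (ih₂ t (by omega)).mpr ((hiter φ₂ q t hlt).mp hS)

/-- Completeness threshold for TDLTL model checking of an MPL system: if
`ls` bounds all local transients over the set `X` of initial vectors and
`cs ≥ 1` is a common multiple of all local cyclicities over `X` (w.r.t. the
maximum cycle mean `λ(A)`), then with `k := ls + cs - 1`, every orbit from
`X` satisfies `φ` under the unbounded semantics iff every orbit from `X`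
satisfies `φ` under the bounded `(k, ls)`-lasso semantics. -/
theorem completeness_threshold {n : ℕ} (hn : 1 ≤ n)
    (A : Matrix (Fin n) (Fin n) (WithBot ℝ)) (hA : MPRegular A)
    (lam : ℝ) (hlam : IsMaxCycleMean A lam)
    (X : Set (Fin n → ℝ)) (ls cs : ℕ) (hcs : 1 ≤ cs)
    (hbound : ∀ x0 ∈ X, ∀ j : ℕ, ls ≤ j → ∀ i : Fin n,
      mpOrbit A x0 (j + cs) i = lam * (cs : ℝ) + mpOrbit A x0 j i) :
    ∀ φ : TDLTL n,
      (∀ x0 ∈ X, Sat φ (mpOrbit A x0)) ↔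
        (∀ x0 ∈ X, BSat (mpOrbit A x0) (ls + cs - 1) ls φ 0) := by
  intro φ
  have main : ∀ x0 ∈ X,
      (Sat φ (mpOrbit A x0) ↔ BSat (mpOrbit A x0) (ls + cs - 1) ls φ 0) := by
    intro x0 hx0
    have h := bsat_iff_sat (mpOrbit A x0) ls cs hcs lam
      (fun m hm i => hbound x0 hx0 m hm i) (ls + cs - 1) (by omega) φ 0 (Nat.zero_le _)
    rw [shift_zero'] at h
    exact h.symm
  constructor
  · intro h x0 hx0; exact (main x0 hx0).mp (h x0 hx0)
  · intro h x0 hx0; exact (main x0 hx0).mpr (h x0 hx0)
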